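/- Let p be an element of a complete lower continuous lattice L. If L is well-founded (every nonempty subset has a minimal element), then every finite join-cover of p can be refined to a minimal join-cover of p. -/

import Mathlib

/-- A finite set `E` covers `p` if `p ≤ ⋁E`. -/
def Covers {α : Type*} [CompleteLattice α] (p : α) (E : Finset α) : Prop :=
  p ≤ E.sup id

/-- `X` refines `E`: every element of `X` lies below some element of `E`. -/
def Refines {α : Type*} [CompleteLattice α] (X E : Finset α) : Prop :=
  ∀ x ∈ X, ∃ e ∈ E, x ≤ e

/-- `E` covers `p` minimally: `E` covers `p` and every finite `X` covering `p`
and refining `E` contains `E`. -/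
def MinCovers {α : Type*} [CompleteLattice α] (p : α) (E : Finset α) : Prop :=
  Covers p E ∧ ∀ X : Finset α, Covers p X → Refines X E → E ⊆ X

/-- `L` is lower continuous: `a ⊔ ⋀D = ⋀ {a ⊔ x : x ∈ D}` for every nonempty
downward directed `D`. -/
def LowerContinuous (α : Type*) [CompleteLattice α] : Prop :=
  ∀ (a : α) (D : Set α), D.Nonempty → DirectedOn (· ≥ ·) D →
    a ⊔ sInf D = ⨅ x ∈ D, a ⊔ x

/-
Among the finite join-covers of `p` refining `E`, choose one whose multiset of elements is
minimal for the Dershowitz–Manna order, which is well founded because `<` is. If a cover `G`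
is not minimal, some cover `X` refining `G` omits an element of `G`; its maximal elements `Y`
still cover `p` and refine `G`, and every element of `Y` outside `G` lies strictly below an
element of `G` that `Y` omits, so `Y` is Dershowitz–Manna smaller than `G`.
-/

open Multiset

theorem Finset.isDershowitzMannaLT_val {α : Type*} [PartialOrder α] [DecidableEq α]
    {Y G : Finset α} (hY : IsAntichain (· ≤ ·) (Y : Set α))
    (hYG : ∀ y ∈ Y, ∃ g ∈ G, y ≤ g) (hGY : ¬ G ⊆ Y) :
    IsDershowitzMannaLT Y.val G.val := by
  refine ⟨Y.val ∩ G.val, (Y \ G).val, (G \ Y).val, ?_, ?_, ?_, ?_⟩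
  · rw [Multiset.empty_eq_zero, Ne, Finset.val_eq_zero]
    exact (Finset.sdiff_nonempty.mpr hGY).ne_empty
  · rw [Finset.sdiff_val, add_comm, Multiset.sub_add_inter]
  · rw [Finset.sdiff_val, add_comm, Multiset.inter_comm, Multiset.sub_add_inter]
  · intro y hy
    obtain ⟨hyY, hyG⟩ := Finset.mem_sdiff.mp hy
    obtain ⟨g, hgG, hyg⟩ := hYG y hyY
    have hlt : y < g := hyg.lt_of_ne fun h => hyG (h ▸ hgG)
    have hgY : g ∉ Y := fun hgY => hY.not_lt hyY hgY hlt
    exact ⟨g, Finset.mem_sdiff.mpr ⟨hgG, hgY⟩, hlt⟩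

section Covers

variable {α : Type*} [CompleteLattice α] {p : α} {X Y Z : Finset α}

theorem Refines.trans (hXY : Refines X Y) (hYZ : Refines Y Z) : Refines X Z := fun x hx =>
  let ⟨y, hy, hxy⟩ := hXY x hx
  let ⟨z, hz, hyz⟩ := hYZ y hy
  ⟨z, hz, hxy.trans hyz⟩

theorem refines_of_subset (h : X ⊆ Y) : Refines X Y := fun x hx => ⟨x, h hx, le_rfl⟩

theorem refines_filter_maximal [DecidablePred (Maximal (· ∈ X))] :
    Refines X (X.filter (Maximal (· ∈ X))) := fun _ hx =>
  let ⟨y, hxy, hy⟩ := X.exists_le_maximal hx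
  ⟨y, Finset.mem_filter.mpr ⟨hy.prop, hy⟩, hxy⟩

theorem Covers.of_refines (hX : Covers p X) (h : Refines X Y) : Covers p Y :=
  hX.trans <| Finset.sup_le fun x hx =>
    let ⟨_, hy, hxy⟩ := h x hx
    hxy.trans (Finset.le_sup (f := id) hy)

theorem exists_covers_isDershowitzMannaLT_of_not_minCovers {G : Finset α} (hG : Covers p G)
    (hmin : ¬ MinCovers p G) :
    ∃ Y : Finset α, Covers p Y ∧ Refines Y G ∧ IsDershowitzMannaLT Y.val G.val := by
  classical
  obtain ⟨X, hXc, hXG, hGX⟩ : ∃ X, Covers p X ∧ Refines X G ∧ ¬ G ⊆ X := by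
    simpa [MinCovers, hG] using hmin
  set Y := X.filter (Maximal (· ∈ X))
  have hYX : Y ⊆ X := Finset.filter_subset _ _
  have hYG : Refines Y G := (refines_of_subset hYX).trans hXG
  have hY : IsAntichain (· ≤ ·) (Y : Set α) :=
    (setOfPred_maximal_antichain (· ∈ X)).subset fun _ hy => (Finset.mem_filter.mp hy).2
  exact ⟨Y, hXc.of_refines refines_filter_maximal, hYG,
    Finset.isDershowitzMannaLT_val hY hYG fun h => hGX (h.trans hYX)⟩

end Covers

theorem stmt10_general {α : Type*} [CompleteLattice α] [WellFoundedLT α]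
    (p : α) (E : Finset α) (hE : Covers p E) :
    ∃ F : Finset α, MinCovers p F ∧ Refines F E := by
  have hwf : WellFounded fun X Y : Finset α => IsDershowitzMannaLT X.val Y.val :=
    InvImage.wf _ wellFounded_isDershowitzMannaLT
  induction E using hwf.induction with
  | _ G ih =>
    by_cases hmin : MinCovers p G
    · exact ⟨G, hmin, refines_of_subset subset_rfl⟩
    · obtain ⟨Y, hYc, hYG, hlt⟩ := exists_covers_isDershowitzMannaLT_of_not_minCovers hE hmin
      obtain ⟨F, hF, hFY⟩ := ih Y hlt hYc
      exact ⟨F, hF, hFY.trans hYG⟩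

/-- In a complete, lower continuous, well-founded lattice, every finite join-cover
of `p` can be refined to a minimal join-cover of `p`. -/
theorem stmt10 {α : Type*} [CompleteLattice α] [WellFoundedLT α]
    (hlc : LowerContinuous α) (p : α) (E : Finset α) (hE : Covers p E) :
    ∃ F : Finset α, MinCovers p F ∧ Refines F E :=
  stmt10_general p E hE
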